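/- Let x, z ∈ 𝐇 be distinct, and let y ∈ ℝ³ satisfy y ∗ y = 1 or y ∗ y = −1, with y not a scalar multiple of x and not a scalar multiple of z. Suppose the angle at z is a right angle, i.e., t_z(y) ∗ t_z(x) = 0. Then the angle α at x satisfies cos α = −(x ∗ y)/‖x ⊗ y‖ · tanh(d(z,x)), where cos α = t_x(y) ∗ t_x(z) and d(z,x) = arccosh(−z ∗ x) is the hyperbolic distance from z to x. -/

import Mathlib

/-
Both angles are computed with the same formula: for `p ∈ 𝐇`,
`t_p(u) ∗ t_p(v) = (u ∗ v + (p ∗ u)(p ∗ v)) / (√(u ∗ u + (p ∗ u)²) √(v ∗ v + (p ∗ v)²))`.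
At `z` the right angle thus says `x ∗ y = -(z ∗ y)(x ∗ z)`. Substituting this into the formula
at `x` and using `‖x ⊗ y‖² = y ∗ y + (x ∗ y)²` and `tanh (arccosh c) = √(c² - 1) / c` for
`c = -(x ∗ z) > 1` leaves an identity of rational functions.
-/

noncomputable section

/-- The Lorentzian inner product `u ∗ v = u₁v₁ + u₂v₂ − u₃v₃` on ℝ³. -/
def lor (u v : Fin 3 → ℝ) : ℝ := u 0 * v 0 + u 1 * v 1 - u 2 * v 2

/-- The hyperboloid model of the hyperbolic plane. -/
def Hyp : Set (Fin 3 → ℝ) := {u | lor u u = -1 ∧ 0 < u 2}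

/-- The Lorentzian cross product `u ⊗ v = J (u × v)`, `J = diag(1,1,−1)`. -/
def lcross (u v : Fin 3 → ℝ) : Fin 3 → ℝ :=
  ![u 1 * v 2 - u 2 * v 1, u 2 * v 0 - u 0 * v 2, -(u 0 * v 1 - u 1 * v 0)]

/-- Lorentzian magnitude `‖w‖ = √(w ∗ w)` (for `w` with `w ∗ w ≥ 0`). -/
def lnorm (w : Fin 3 → ℝ) : ℝ := Real.sqrt (lor w w)

/-- The unit tangent vector at `p` toward `y`:
`t_p(y) = (y + (p ∗ y)p)/√(y ∗ y + (p ∗ y)²)`. -/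
def tang (p y : Fin 3 → ℝ) : Fin 3 → ℝ :=
  (Real.sqrt (lor y y + lor p y ^ 2))⁻¹ • (y + lor p y • p)

/-- Inverse hyperbolic cosine. -/
def arcosh (x : ℝ) : ℝ := Real.log (x + Real.sqrt (x ^ 2 - 1))

/-- Hyperbolic distance between points of the hyperboloid: `d(p,q) = arccosh(−p ∗ q)`. -/
def dHyp (p q : Fin 3 → ℝ) : ℝ := arcosh (-lor p q)

lemma lor_comm (u v : Fin 3 → ℝ) : lor u v = lor v u := by
  simp only [lor]; ring

lemma lor_add_left (u v w : Fin 3 → ℝ) : lor (u + v) w = lor u w + lor v w := by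
  simp only [lor, Pi.add_apply]; ring

lemma lor_add_right (u v w : Fin 3 → ℝ) : lor u (v + w) = lor u v + lor u w := by
  simp only [lor, Pi.add_apply]; ring

lemma lor_smul_left (r : ℝ) (u v : Fin 3 → ℝ) : lor (r • u) v = r * lor u v := by
  simp only [lor, Pi.smul_apply, smul_eq_mul]; ring

lemma lor_smul_right (r : ℝ) (u v : Fin 3 → ℝ) : lor u (r • v) = r * lor u v := by
  simp only [lor, Pi.smul_apply, smul_eq_mul]; ring

lemma lor_self_pos_of_lor_eq_zero {p w : Fin 3 → ℝ} (hp : lor p p < 0) (hpw : lor p w = 0)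
    (hw : w ≠ 0) : 0 < lor w w := by
  simp only [lor] at hp hpw ⊢
  have hp2 : p 2 ≠ 0 := fun h => by
    rw [h] at hp; nlinarith [sq_nonneg (p 0), sq_nonneg (p 1)]
  have hw01 : 0 < w 0 ^ 2 + w 1 ^ 2 := by
    by_contra! h
    have hw0 : w 0 = 0 := by nlinarith [sq_nonneg (w 0), sq_nonneg (w 1)]
    have hw1 : w 1 = 0 := by nlinarith [sq_nonneg (w 0), sq_nonneg (w 1)]
    have hw2 : w 2 = 0 := by
      rw [hw0, hw1] at hpw
      exact (mul_eq_zero.mp (by linarith : p 2 * w 2 = 0)).resolve_left hp2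
    exact hw (funext fun i => by fin_cases i <;> assumption)
  -- Lagrange's identity, with `p₂ w₂ = p₀ w₀ + p₁ w₁` substituted.
  have key : p 2 ^ 2 * (w 0 * w 0 + w 1 * w 1 - w 2 * w 2)
      = -(p 0 * p 0 + p 1 * p 1 - p 2 * p 2) * (w 0 ^ 2 + w 1 ^ 2)
        + (p 0 * w 1 - p 1 * w 0) ^ 2 := by
    linear_combination (p 0 * w 0 + p 1 * w 1 + p 2 * w 2) * hpw
  have hpos : 0 < p 2 ^ 2 * (w 0 * w 0 + w 1 * w 1 - w 2 * w 2) := by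
    rw [key]; nlinarith [sq_nonneg (p 0 * w 1 - p 1 * w 0)]
  exact pos_of_mul_pos_right hpos (sq_nonneg _)

/-- `y + (p ∗ y) p` is a nonzero vector Lorentz-orthogonal to `p`, of square `y ∗ y + (p ∗ y)²`. -/
lemma lor_self_add_lor_sq_pos {p y : Fin 3 → ℝ} (hp : lor p p = -1)
    (hyp : ¬ ∃ t : ℝ, y = t • p) : 0 < lor y y + lor p y ^ 2 := by
  set w := y + lor p y • p
  have hpw : lor p w = 0 := by
    rw [lor_add_right, lor_smul_right, hp]; ring
  have hww : lor w w = lor y y + lor p y ^ 2 := by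
    simp only [w, lor_add_left, lor_add_right, lor_smul_left, lor_smul_right, hp, lor_comm y p]
    ring
  have hw : w ≠ 0 := fun h => hyp ⟨-lor p y, by rw [neg_smul, eq_neg_iff_add_eq_zero, ← h]⟩
  exact hww ▸ lor_self_pos_of_lor_eq_zero (by linarith) hpw hw

lemma lor_neg_of_mem_Hyp {x z : Fin 3 → ℝ} (hx : x ∈ Hyp) (hz : z ∈ Hyp) : lor x z < 0 := by
  obtain ⟨hx1, hx2⟩ := hx
  obtain ⟨hz1, hz2⟩ := hz
  simp only [lor] at hx1 hz1 ⊢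
  have hcs : (x 0 * z 0 + x 1 * z 1) ^ 2 < (x 2 * z 2) ^ 2 := by
    nlinarith [sq_nonneg (x 0 * z 1 - x 1 * z 0), mul_pos hx2 hz2]
  nlinarith [mul_pos hx2 hz2]

lemma lor_lt_neg_one_of_mem_Hyp {x z : Fin 3 → ℝ} (hx : x ∈ Hyp) (hz : z ∈ Hyp) (hxz : x ≠ z) :
    lor x z < -1 := by
  have hzx : ¬ ∃ t : ℝ, z = t • x := by
    rintro ⟨t, rfl⟩
    have ht : t ^ 2 = 1 := by
      have := hz.1
      rw [lor_smul_left, lor_smul_right, hx.1] at this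
      linarith
    have ht1 : t = 1 := by
      have : 0 < t * x 2 := hz.2
      rcases sq_eq_one_iff.mp ht with rfl | rfl
      · rfl
      · nlinarith [hx.2]
    exact hxz (by rw [ht1, one_smul])
  have hsq := lor_self_add_lor_sq_pos hx.1 hzx
  rw [hz.1] at hsq
  nlinarith [lor_neg_of_mem_Hyp hx hz]

lemma lor_tang_tang {p : Fin 3 → ℝ} (hp : lor p p = -1) (u v : Fin 3 → ℝ) :
    lor (tang p u) (tang p v) = (lor u v + lor p u * lor p v)
      / (√(lor u u + lor p u ^ 2) * √(lor v v + lor p v ^ 2)) := by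
  have hexp : lor (u + lor p u • p) (v + lor p v • p) = lor u v + lor p u * lor p v := by
    simp only [lor_add_left, lor_add_right, lor_smul_left, lor_smul_right, hp, lor_comm u p]
    ring
  rw [tang, tang, lor_smul_left, lor_smul_right, hexp, div_eq_mul_inv, mul_inv]
  ring

lemma lnorm_lcross {x : Fin 3 → ℝ} (hx : lor x x = -1) (y : Fin 3 → ℝ) :
    lnorm (lcross x y) = √(lor y y + lor x y ^ 2) := by
  have h : lor (lcross x y) (lcross x y) = lor x y ^ 2 - lor x x * lor y y := by
    simp only [lor, lcross, Fin.isValue, neg_sub, Matrix.cons_val_zero, Matrix.cons_val_one,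
      Matrix.cons_val]
    ring
  rw [lnorm, h, hx]; ring_nf

lemma tanh_dHyp {x z : Fin 3 → ℝ} (h : lor x z < -1) :
    Real.tanh (dHyp z x) = √(lor x z ^ 2 - 1) / -lor x z := by
  rw [dHyp, lor_comm, ← neg_sq (lor x z)]
  exact Real.tanh_arcosh (by linarith)

theorem cosine_right_triangle_general
    (x z y : Fin 3 → ℝ) (hx : x ∈ Hyp) (hz : z ∈ Hyp) (hxz : x ≠ z)
    (hyx : ¬ ∃ t : ℝ, y = t • x) (hyz : ¬ ∃ t : ℝ, y = t • z)
    (hright : lor (tang z y) (tang z x) = 0) :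
    lor (tang x y) (tang x z)
      = -(lor x y) / lnorm (lcross x y) * Real.tanh (dHyp z x) := by
  have hc : lor x z < -1 := lor_lt_neg_one_of_mem_Hyp hx hz hxz
  have hxz_sq : 0 < lor x z ^ 2 - 1 := by nlinarith
  have hy_x : 0 < √(lor y y + lor x y ^ 2) := Real.sqrt_pos.mpr (lor_self_add_lor_sq_pos hx.1 hyx)
  have hy_z : 0 < √(lor y y + lor z y ^ 2) := Real.sqrt_pos.mpr (lor_self_add_lor_sq_pos hz.1 hyz)
  have hsqrt_xz : 0 < √(lor x z ^ 2 - 1) := Real.sqrt_pos.mpr hxz_sq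
  have hxx : lor x x + lor z x ^ 2 = lor x z ^ 2 - 1 := by rw [hx.1, lor_comm]; ring
  have hzz : lor z z + lor x z ^ 2 = lor x z ^ 2 - 1 := by rw [hz.1]; ring
  have hperp : lor x y + lor z y * lor x z = 0 := by
    rw [lor_tang_tang hz.1, hxx, div_eq_zero_iff, lor_comm y x, lor_comm z x] at hright
    exact hright.resolve_right (mul_pos hy_z hsqrt_xz).ne'
  rw [lor_tang_tang hx.1, hzz, lnorm_lcross hx.1, tanh_dHyp hc, lor_comm y z]
  have hsq : √(lor x z ^ 2 - 1) ^ 2 = lor x z ^ 2 - 1 := Real.sq_sqrt hxz_sq.le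
  have hc0 : lor x z ≠ 0 := by linarith
  field_simp
  linear_combination hperp - lor x y * hsq

/-- Corollary 3.6: in a generalized right triangle with right angle at `z`,
`cos α = −(x ∗ y)/‖x ⊗ y‖ · tanh(d(z,x))`, where `α` is the angle at `x`. -/
theorem cosine_right_triangle
    (x z y : Fin 3 → ℝ) (hx : x ∈ Hyp) (hz : z ∈ Hyp) (hxz : x ≠ z)
    (hy : lor y y = 1 ∨ lor y y = -1)
    (hyx : ¬ ∃ t : ℝ, y = t • x) (hyz : ¬ ∃ t : ℝ, y = t • z)
    (hright : lor (tang z y) (tang z x) = 0) :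
    lor (tang x y) (tang x z)
      = -(lor x y) / lnorm (lcross x y) * Real.tanh (dHyp z x) :=
  cosine_right_triangle_general x z y hx hz hxz hyx hyz hright
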